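/- arXiv:1005.2071 — 13 statements merged into one kernel-verified Lean document; each statement's English description precedes it below -/
import Mathlib

section
/- Consider the free monoid on two generators P and R modulo the relations R·P·R = P·P·P and R·P·P = P·P·R. Then for every l ≥ 1, the number of equivalence classes of words of length l is exactly 2l. -/
/-- One rewriting step: replace a factor `RPR` by `PPP`, or `RPP` by `PPR`
(we encode `P` as `false` and `R` as `true`). -/
def qdStep (w₁ w₂ : List Bool) : Prop :=
  ∃ u v : List Bool,
    (w₁ = u ++ [true, false, true] ++ v ∧ w₂ = u ++ [false, false, false] ++ v) ∨
    (w₁ = u ++ [true, false, false] ++ v ∧ w₂ = u ++ [false, false, true] ++ v)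

/-- The equivalence on words of length `l` generated by the rewriting steps. -/
def qdSetoid (l : ℕ) : Setoid {w : List Bool // w.length = l} where
  r a b := Relation.EqvGen qdStep a.1 b.1
  iseqv :=
    ⟨fun a => (Relation.EqvGen.is_equivalence qdStep).refl a.1,
     fun h => (Relation.EqvGen.is_equivalence qdStep).symm h,
     fun h₁ h₂ => (Relation.EqvGen.is_equivalence qdStep).trans h₁ h₂⟩

/-! ### Auxiliary development -/

abbrev QDS := ℕ × ℕ × Bool

def qdGo (s : QDS) (x : Bool) : QDS :=
  match s, x with
  | (a, b, false), false => if b = 0 then (a+1, 0, false) else (a, b, true)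
  | (a, b, true), false => (a+2, b, false)
  | (a, b, false), true => (a, b+1, false)
  | (a, 0, true), true => (a+1, 1, false)
  | (a, 1, true), true => (a+3, 0, false)
  | (a, b+2, true), true => (a+2, b+1, true)

def qdPhi (w : List Bool) : QDS := w.foldl qdGo (0, 0, false)

def qdWt (s : QDS) : ℕ := s.1 + s.2.1 + s.2.2.toNat

def qdNf (s : QDS) : List Bool :=
  List.replicate s.1 false ++ List.replicate s.2.1 true ++ (if s.2.2 then [false] else [])

def qdValid (s : QDS) : Prop := s.2.2 = true → 1 ≤ s.2.1

lemma qdGo_run1 (s : QDS) :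
    [true, false, true].foldl qdGo s = [false, false, false].foldl qdGo s := by
  obtain ⟨a, b, e⟩ := s
  cases e <;> rcases b with _ | _ | b <;> simp [qdGo]

lemma qdGo_run2 (s : QDS) :
    [true, false, false].foldl qdGo s = [false, false, true].foldl qdGo s := by
  obtain ⟨a, b, e⟩ := s
  cases e <;> rcases b with _ | _ | b <;> simp [qdGo]

lemma qdPhi_step {w₁ w₂ : List Bool} (h : qdStep w₁ w₂) : qdPhi w₁ = qdPhi w₂ := by
  obtain ⟨u, v, h | h⟩ := h <;> obtain ⟨h1, h2⟩ := h <;> subst h1 <;> subst h2 <;>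
    simp only [qdPhi, List.foldl_append]
  · rw [qdGo_run1]
  · rw [qdGo_run2]

lemma qdPhi_eqv {w₁ w₂ : List Bool} (h : Relation.EqvGen qdStep w₁ w₂) :
    qdPhi w₁ = qdPhi w₂ := by
  induction h with
  | rel _ _ h => exact qdPhi_step h
  | refl => rfl
  | symm _ _ _ ih => exact ih.symm
  | trans _ _ _ _ _ ih1 ih2 => exact ih1.trans ih2

lemma qdWt_go (s : QDS) (x : Bool) : qdWt (qdGo s x) = qdWt s + 1 := by
  obtain ⟨a, b, e⟩ := s
  cases e <;> cases x <;> rcases b with _ | _ | b <;> simp [qdGo, qdWt] <;> omega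

lemma qdWt_foldl (w : List Bool) : ∀ s : QDS, qdWt (w.foldl qdGo s) = qdWt s + w.length := by
  induction w with
  | nil => intro s; simp
  | cons x w ih =>
      intro s
      rw [List.foldl_cons, ih, qdWt_go]
      simp
      omega

lemma qdWt_phi (w : List Bool) : qdWt (qdPhi w) = w.length := by
  show qdWt (w.foldl qdGo (0,0,false)) = w.length
  rw [qdWt_foldl]
  simp [qdWt]

lemma qd_of_eq {a b : List Bool} (h : a = b) : Relation.EqvGen qdStep a b := by
  subst h; exact Relation.EqvGen.refl _

lemma qd_trans {a b c : List Bool} (h1 : Relation.EqvGen qdStep a b)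
    (h2 : Relation.EqvGen qdStep b c) : Relation.EqvGen qdStep a c :=
  Relation.EqvGen.trans _ _ _ h1 h2

lemma qd_symm {a b : List Bool} (h : Relation.EqvGen qdStep a b) :
    Relation.EqvGen qdStep b a := Relation.EqvGen.symm _ _ h

lemma qdValid_go (s : QDS) (x : Bool) : qdValid (qdGo s x) := by
  obtain ⟨a, b, e⟩ := s
  cases e <;> cases x <;> rcases b with _ | _ | b <;> simp [qdGo, qdValid]

lemma qdValid_phi (w : List Bool) : qdValid (qdPhi w) := by
  induction w using List.reverseRecOn with
  | nil => simp [qdPhi, qdValid]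
  | append_singleton w x _ =>
      simp only [qdPhi, List.foldl_append, List.foldl_cons, List.foldl_nil]
      exact qdValid_go _ _

lemma qdNf_length (s : QDS) : (qdNf s).length = qdWt s := by
  obtain ⟨a, b, e⟩ := s
  cases e <;> simp [qdNf, qdWt] <;> omega

/-- appending on the right preserves the equivalence -/
lemma qd_appendRight {w₁ w₂ : List Bool} (v : List Bool)
    (h : Relation.EqvGen qdStep w₁ w₂) : Relation.EqvGen qdStep (w₁ ++ v) (w₂ ++ v) := by
  induction h with
  | rel x y h =>
      obtain ⟨u, v', h | h⟩ := h <;> obtain ⟨h1, h2⟩ := h <;> subst h1 <;> subst h2 <;>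
        refine Relation.EqvGen.rel _ _ ⟨u, v' ++ v, ?_⟩ <;> simp
  | refl x => exact Relation.EqvGen.refl _
  | symm _ _ _ ih => exact qd_symm ih
  | trans _ _ _ _ _ ih1 ih2 => exact qd_trans ih1 ih2

lemma qd_appendLeft {w₁ w₂ : List Bool} (u : List Bool)
    (h : Relation.EqvGen qdStep w₁ w₂) : Relation.EqvGen qdStep (u ++ w₁) (u ++ w₂) := by
  induction h with
  | rel x y h =>
      obtain ⟨u', v', h | h⟩ := h <;> obtain ⟨h1, h2⟩ := h <;> subst h1 <;> subst h2 <;>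
        refine Relation.EqvGen.rel _ _ ⟨u ++ u', v', ?_⟩ <;> simp
  | refl x => exact Relation.EqvGen.refl _
  | symm _ _ _ ih => exact qd_symm ih
  | trans _ _ _ _ _ ih1 ih2 => exact qd_trans ih1 ih2

/-- `R^b PP ≈ PP R^b` -/
lemma qd_swapPP (b : ℕ) :
    Relation.EqvGen qdStep (List.replicate b true ++ [false, false])
      ([false, false] ++ List.replicate b true) := by
  induction b with
  | zero => exact Relation.EqvGen.refl _
  | succ b ih =>
      have h1 : Relation.EqvGen qdStep ([true] ++ (List.replicate b true ++ [false, false]))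
          ([true] ++ ([false, false] ++ List.replicate b true)) := qd_appendLeft _ ih
      have h2 : qdStep ([true, false, false] ++ List.replicate b true)
          ([false, false, true] ++ List.replicate b true) :=
        ⟨[], List.replicate b true, Or.inr ⟨by simp, by simp⟩⟩
      refine qd_trans (qd_of_eq ?_) (qd_trans h1 (qd_trans (qd_of_eq ?_)
        (qd_trans (Relation.EqvGen.rel _ _ h2) (qd_of_eq ?_))))
      · simp [List.replicate_succ]
      · simp
      · simp [List.replicate_succ]

lemma qdNf_go (s : QDS) (hs : qdValid s) (x : Bool) :
    Relation.EqvGen qdStep (qdNf s ++ [x]) (qdNf (qdGo s x)) := by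
  obtain ⟨a, b, e⟩ := s
  cases e with
  | false =>
      cases x with
      | false =>
          rcases b with _ | b
          · exact qd_of_eq (by simp [qdNf, qdGo, List.replicate_succ'])
          · exact qd_of_eq (by simp [qdNf, qdGo])
      | true =>
          exact qd_of_eq (by simp [qdNf, qdGo, List.replicate_succ'])
  | true =>
      have hb : 1 ≤ b := hs rfl
      cases x with
      | false =>
          -- P^a R^b P P ≈ P^(a+2) R^b
          have key := qd_appendLeft (List.replicate a false) (qd_swapPP b)
          have e1 : qdNf (a, b, true) ++ [false]
              = List.replicate a false ++ (List.replicate b true ++ [false, false]) := by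
            simp [qdNf]
          have e2 : List.replicate a false ++ ([false, false] ++ List.replicate b true)
              = qdNf (qdGo (a, b, true) false) := by
            simp [qdNf, qdGo, List.replicate_add]
          rw [e1, ← e2]
          exact key
      | true =>
          rcases b with _ | _ | b
          · omega
          · -- P^a R P R ≈ P^(a+3)
            have h : qdStep (List.replicate a false ++ [true, false, true] ++ [])
                (List.replicate a false ++ [false, false, false] ++ []) :=
              ⟨List.replicate a false, [], Or.inl ⟨rfl, rfl⟩⟩
            have e1 : qdNf (a, 1, true) ++ [true]
                = List.replicate a false ++ [true, false, true] ++ [] := by simp [qdNf]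
            have e2 : List.replicate a false ++ [false, false, false] ++ []
                = qdNf (qdGo (a, 1, true) true) := by
              simp [qdNf, qdGo, List.replicate_add]
            rw [e1, ← e2]
            exact Relation.EqvGen.rel _ _ h
          · -- P^a R^(b+2) P R ≈ P^a R^(b+1) PPP ≈ P^(a+2) R^(b+1) P
            have h1 : qdStep
                ((List.replicate a false ++ List.replicate (b+1) true) ++ [true, false, true] ++ [])
                ((List.replicate a false ++ List.replicate (b+1) true) ++ [false, false, false] ++ []) :=
              ⟨_, [], Or.inl ⟨rfl, rfl⟩⟩
            have e1 : qdNf (a, b+2, true) ++ [true]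
                = (List.replicate a false ++ List.replicate (b+1) true) ++ [true, false, true] ++ [] := by
              simp [qdNf]
              rw [show b + 2 = (b+1) + 1 by rfl, List.replicate_succ']
              simp
            have e2 : (List.replicate a false ++ List.replicate (b+1) true) ++ [false, false, false] ++ []
                = (List.replicate a false ++ (List.replicate (b+1) true ++ [false, false])) ++ [false] := by
              simp
            have e3 : (List.replicate a false ++ ([false, false] ++ List.replicate (b+1) true)) ++ [false]
                = qdNf (qdGo (a, b+2, true) true) := by
              simp [qdNf, qdGo, List.replicate_add]
            rw [e1]
            refine qd_trans (Relation.EqvGen.rel _ _ h1) (qd_trans (qd_of_eq e2) ?_)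
            refine qd_trans ?_ (qd_of_eq e3)
            exact qd_appendRight [false] (qd_appendLeft (List.replicate a false) (qd_swapPP (b+1)))

lemma qd_nf_phi (w : List Bool) : Relation.EqvGen qdStep w (qdNf (qdPhi w)) := by
  induction w using List.reverseRecOn with
  | nil => exact Relation.EqvGen.refl _
  | append_singleton w x ih =>
      have h1 := qd_appendRight [x] ih
      have h2 := qdNf_go (qdPhi w) (qdValid_phi w) x
      have e : qdPhi (w ++ [x]) = qdGo (qdPhi w) x := by
        simp [qdPhi, List.foldl_append]
      rw [e]
      exact qd_trans h1 h2

lemma qdPhi_nf (s : QDS) (hs : qdValid s) : qdPhi (qdNf s) = s := by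
  obtain ⟨a, b, e⟩ := s
  have hP : ∀ n : ℕ, ∀ k : ℕ, (List.replicate n false).foldl qdGo (k, 0, false) = (k + n, 0, false) := by
    intro n
    induction n with
    | zero => intro k; simp
    | succ n ih => intro k; simp [List.replicate_succ, qdGo, ih]; omega
  have hR : ∀ n : ℕ, ∀ a k : ℕ, (List.replicate n true).foldl qdGo (a, k, false) = (a, k + n, false) := by
    intro n
    induction n with
    | zero => intro a k; simp
    | succ n ih => intro a k; simp [List.replicate_succ, qdGo, ih]; omega
  cases e with
  | false =>
      simp only [qdNf, if_neg (Bool.false_ne_true), List.append_nil, qdPhi, List.foldl_append]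
      rw [show ((0:ℕ), (0:ℕ), false) = ((0:ℕ), (0:ℕ), false) from rfl, hP, hR]
      simp
  | true =>
      have hb : 1 ≤ b := hs rfl
      rcases b with _ | b
      · omega
      · simp only [qdNf, if_pos rfl, qdPhi, List.foldl_append]
        rw [hP, hR]
        simp only [Nat.zero_add, List.foldl_cons, List.foldl_nil]
        simp [qdGo]

/-- the number of equivalence classes of words of length `l ≥ 1`
in the two letters `P`, `R`, modulo `RPR = PPP` and `RPP = PPR`, is `2l`. -/
theorem stmt_3 (l : ℕ) (hl : 1 ≤ l) :
    Nat.card (Quotient (qdSetoid l)) = 2 * l := by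
  have e1 : Quotient (qdSetoid l) ≃ {s : QDS // qdValid s ∧ qdWt s = l} := by
    refine
      { toFun := Quotient.lift
          (fun w => ⟨qdPhi w.1, qdValid_phi w.1, by rw [qdWt_phi]; exact w.2⟩)
          (fun a b h => Subtype.ext (qdPhi_eqv h))
        invFun := fun s => ⟦⟨qdNf s.1, by rw [qdNf_length]; exact s.2.2⟩⟧
        left_inv := ?_
        right_inv := ?_ }
    · intro q
      induction q using Quotient.ind with
      | _ w =>
        apply Quotient.sound
        exact qd_symm (qd_nf_phi w.1)
    · intro s
      exact Subtype.ext (qdPhi_nf s.1 s.2.1)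
  have e2 : {s : QDS // qdValid s ∧ qdWt s = l} ≃ Fin (2 * l) := by
    refine
      { toFun := fun s => ⟨cond s.1.2.2 (l + 1 + s.1.1) s.1.1, ?_⟩
        invFun := fun k => if h : k.1 ≤ l then ⟨(k.1, l - k.1, false), ?_⟩
          else ⟨(k.1 - (l + 1), 2 * l - k.1, true), ?_⟩
        left_inv := ?_
        right_inv := ?_ }
    · obtain ⟨⟨a, b, e⟩, hv, hw⟩ := s
      simp only [qdWt] at hw
      cases e
      · simp only [cond_false]
        simp only [Bool.toNat_false] at hw
        omega
      · have hb : 1 ≤ b := hv rfl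
        simp only [cond_true]
        simp only [Bool.toNat_true] at hw
        omega
    · refine ⟨fun hcon => by simp at hcon, ?_⟩
      simp only [qdWt, Bool.toNat_false]
      omega
    · refine ⟨fun _ => ?_, ?_⟩
      · have := k.2
        simp only
        omega
      · have := k.2
        simp only [qdWt, Bool.toNat_true]
        omega
    · rintro ⟨⟨a, b, e⟩, hv, hw⟩
      simp only [qdWt] at hw
      cases e
      · simp only [cond_false, Bool.toNat_false] at hw ⊢
        have ha : a ≤ l := by omega
        rw [dif_pos ha]
        apply Subtype.ext
        simp [Prod.mk.injEq]
        omega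
      · have hb : 1 ≤ b := hv rfl
        simp only [cond_true, Bool.toNat_true] at hw ⊢
        have ha : ¬ (l + 1 + a ≤ l) := by omega
        rw [dif_neg ha]
        apply Subtype.ext
        simp [Prod.mk.injEq]
        omega
    · intro k
      by_cases h : k.1 ≤ l
      · simp only [dif_pos h]
        apply Fin.ext
        simp
      · simp only [dif_neg h]
        apply Fin.ext
        have := k.2
        simp only [cond_true]
        omega
  rw [Nat.card_congr (e1.trans e2), Nat.card_eq_fintype_card, Fintype.card_fin]
end

section
/- Every word of length l in the two letters P and R is equivalent, under the rewriting relations RPR ↔ PPP and RPP ↔ PPR, to a word of the form P^a R^b (with a + b = l) or of the form P^a R^b P (with a + b + 1 = l, b ≥ 1). -/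
def nf (a b : ℕ) : List Bool := List.replicate a false ++ List.replicate b true

def Good (w : List Bool) : Prop :=
  ∃ a b : ℕ,
    (w.length = a + b ∧ Relation.EqvGen qdStep w (nf a b)) ∨
    (w.length = a + b + 1 ∧ 1 ≤ b ∧ Relation.EqvGen qdStep w (nf a b ++ [false]))

lemma qdStep_cons (x : Bool) {w₁ w₂ : List Bool} (h : qdStep w₁ w₂) :
    qdStep (x :: w₁) (x :: w₂) := by
  obtain ⟨u, v, h⟩ := h
  refine ⟨x :: u, v, ?_⟩
  rcases h with ⟨h1, h2⟩ | ⟨h1, h2⟩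
  · exact Or.inl ⟨by simp [h1], by simp [h2]⟩
  · exact Or.inr ⟨by simp [h1], by simp [h2]⟩

lemma eqv_cons (x : Bool) {w₁ w₂ : List Bool} (h : Relation.EqvGen qdStep w₁ w₂) :
    Relation.EqvGen qdStep (x :: w₁) (x :: w₂) := by
  induction h with
  | rel a b h => exact .rel _ _ (qdStep_cons x h)
  | refl a => exact .refl _
  | symm a b _ ih => exact .symm _ _ ih
  | trans a b c _ _ ih1 ih2 => exact .trans _ _ _ ih1 ih2

lemma step_RPR (v : List Bool) :
    qdStep (true :: false :: true :: v) (false :: false :: false :: v) :=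
  ⟨[], v, Or.inl ⟨rfl, rfl⟩⟩

lemma step_RPP (v : List Bool) :
    qdStep (true :: false :: false :: v) (false :: false :: true :: v) :=
  ⟨[], v, Or.inr ⟨rfl, rfl⟩⟩

lemma qdStep_length {w₁ w₂ : List Bool} (h : qdStep w₁ w₂) : w₁.length = w₂.length := by
  obtain ⟨u, v, h⟩ := h
  rcases h with ⟨h1, h2⟩ | ⟨h1, h2⟩ <;> subst h1 <;> subst h2 <;> simp

lemma eqv_length {w₁ w₂ : List Bool} (h : Relation.EqvGen qdStep w₁ w₂) :
    w₁.length = w₂.length := by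
  induction h with
  | rel a b h => exact qdStep_length h
  | refl a => rfl
  | symm a b _ ih => exact ih.symm
  | trans a b c _ _ ih1 ih2 => exact ih1.trans ih2

lemma good_of_eqv {w w' : List Bool} (h : Relation.EqvGen qdStep w w') (hg : Good w') :
    Good w := by
  obtain ⟨a, b, hc⟩ := hg
  have hl := eqv_length h
  rcases hc with ⟨h1, h2⟩ | ⟨h1, h2, h3⟩
  · exact ⟨a, b, Or.inl ⟨hl.trans h1, h.trans _ _ _ h2⟩⟩
  · exact ⟨a, b, Or.inr ⟨hl.trans h1, h2, h.trans _ _ _ h3⟩⟩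

lemma nf_cons_false (a b : ℕ) : nf (a + 1) b = false :: nf a b := by
  simp [nf, List.replicate_succ]

lemma nf_zero_left (b : ℕ) : nf 0 b = List.replicate b true := by simp [nf]

lemma good_consP {w : List Bool} (h : Good w) : Good (false :: w) := by
  obtain ⟨a, b, hc⟩ := h
  rcases hc with ⟨h1, h2⟩ | ⟨h1, h2, h3⟩
  · refine ⟨a + 1, b, Or.inl ⟨by simp [h1]; omega, ?_⟩⟩
    rw [nf_cons_false]; exact eqv_cons false h2
  · refine ⟨a + 1, b, Or.inr ⟨by simp [h1]; omega, h2, ?_⟩⟩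
    rw [nf_cons_false]
    exact eqv_cons false h3

lemma nf_length (a b : ℕ) : (nf a b).length = a + b := by simp [nf]

lemma goodR (a : ℕ) :
    ∀ b : ℕ, Good (true :: nf a b) ∧ Good (true :: (nf a b ++ [false])) := by
  induction a using Nat.strong_induction_on with
  | _ a ih =>
    match a with
    | 0 =>
      intro b
      constructor
      · refine ⟨0, b + 1, Or.inl ⟨by simp [nf_length], ?_⟩⟩
        have : true :: nf 0 b = nf 0 (b + 1) := by
          simp [nf, List.replicate_succ]
        rw [this]; exact .refl _
      · refine ⟨0, b + 1, Or.inr ⟨by simp [nf_length], by omega, ?_⟩⟩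
        have : true :: (nf 0 b ++ [false]) = nf 0 (b + 1) ++ [false] := by
          simp [nf, List.replicate_succ]
        rw [this]; exact .refl _
    | 1 =>
      intro b
      constructor
      · match b with
        | 0 =>
          refine ⟨0, 1, Or.inr ⟨by simp [nf_length], le_refl 1, .refl _⟩⟩
        | c + 1 =>
          refine ⟨3, c, Or.inl ⟨by simp [nf_length]; omega, ?_⟩⟩
          have h1 : true :: nf 1 (c + 1) = true :: false :: true :: List.replicate c true := by
            simp [nf, List.replicate_succ]
          have h2 : nf 3 c = false :: false :: false :: List.replicate c true := by
            simp [nf, List.replicate_succ]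
          rw [h1, h2]
          exact .rel _ _ (step_RPR _)
      · match b with
        | 0 =>
          refine ⟨2, 1, Or.inl ⟨by simp [nf_length], ?_⟩⟩
          have h1 : true :: (nf 1 0 ++ [false]) = true :: false :: false :: ([] : List Bool) := by
            simp [nf]
          have h2 : nf 2 1 = false :: false :: true :: ([] : List Bool) := by
            simp [nf, List.replicate_succ]
          rw [h1, h2]
          exact .rel _ _ (step_RPP _)
        | 1 =>
          refine ⟨4, 0, Or.inl ⟨by simp [nf_length], ?_⟩⟩
          have h1 : true :: (nf 1 1 ++ [false]) =
              true :: false :: true :: ([false] : List Bool) := by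
            simp [nf, List.replicate_succ]
          have h2 : nf 4 0 = false :: false :: false :: ([false] : List Bool) := by
            simp [nf, List.replicate_succ]
          rw [h1, h2]
          exact .rel _ _ (step_RPR _)
        | c + 2 =>
          refine ⟨3, c + 1, Or.inr ⟨by simp [nf_length]; omega, by omega, ?_⟩⟩
          have h1 : true :: (nf 1 (c + 2) ++ [false]) =
              true :: false :: true :: (List.replicate (c + 1) true ++ [false]) := by
            simp [nf, List.replicate_succ]
          have h2 : nf 3 (c + 1) ++ [false] =
              false :: false :: false :: (List.replicate (c + 1) true ++ [false]) := by
            simp [nf, List.replicate_succ]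
          rw [h1, h2]
          exact .rel _ _ (step_RPR _)
    | a' + 2 =>
      intro b
      have hIH := ih a' (by omega) b
      constructor
      · have hstep : Relation.EqvGen qdStep (true :: nf (a' + 2) b)
            (false :: false :: (true :: nf a' b)) := by
          have h1 : true :: nf (a' + 2) b = true :: false :: false :: nf a' b := by
            simp [nf, List.replicate_succ]
          rw [h1]
          exact .rel _ _ (step_RPP _)
        exact good_of_eqv hstep (good_consP (good_consP hIH.1))
      · have hstep : Relation.EqvGen qdStep (true :: (nf (a' + 2) b ++ [false]))
            (false :: false :: (true :: (nf a' b ++ [false]))) := by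
          have h1 : true :: (nf (a' + 2) b ++ [false]) =
              true :: false :: false :: (nf a' b ++ [false]) := by
            simp [nf, List.replicate_succ]
          rw [h1]
          exact .rel _ _ (step_RPP _)
        exact good_of_eqv hstep (good_consP (good_consP hIH.2))

lemma good_all (w : List Bool) : Good w := by
  induction w with
  | nil => exact ⟨0, 0, Or.inl ⟨rfl, .refl _⟩⟩
  | cons x w ihw =>
    cases x with
    | false => exact good_consP ihw
    | true =>
      obtain ⟨a, b, hc⟩ := ihw
      rcases hc with ⟨h1, h2⟩ | ⟨h1, h2, h3⟩
      · exact good_of_eqv (eqv_cons true h2) (goodR a b).1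
      · exact good_of_eqv (eqv_cons true h3) (goodR a b).2

/-- every word in `P`, `R` is equivalent (under the rewriting
relations `RPR ↔ PPP`, `RPP ↔ PPR`) to a word `P^a R^b`, or to a word
`P^a R^b P` with `b ≥ 1`. -/
theorem stmt_4 (w : List Bool) :
    ∃ a b : ℕ,
      (w.length = a + b ∧
        Relation.EqvGen qdStep w
          (List.replicate a false ++ List.replicate b true)) ∨
      (w.length = a + b + 1 ∧ 1 ≤ b ∧
        Relation.EqvGen qdStep w
          (List.replicate a false ++ List.replicate b true ++ [false])) := by
  obtain ⟨a, b, hc⟩ := good_all w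
  exact ⟨a, b, hc⟩
end

section
/- Let ψ : ℝ² → ℝ² be given by ψ(z₁,z₂) = (z₂, 1/z₁) on the set where z₁ ≠ 0. Then (a) the fourth iterate of ψ is the identity, and (b) the function I(z₁,z₂) = (z₁+1)²(z₂+1)²/(z₁z₂) satisfies I(ψ(z)) = I(z) whenever z₁ z₂ ≠ 0. -/
/-- for `ψ(z₁,z₂) = (z₂, 1/z₁)`, the fourth iterate of `ψ` is the
identity, and `I(z₁,z₂) = (z₁+1)²(z₂+1)²/(z₁z₂)` is invariant under `ψ`. -/
theorem stmt_7 (z₁ z₂ : ℝ) (h₁ : z₁ ≠ 0) (h₂ : z₂ ≠ 0) :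
    (fun p : ℝ × ℝ => (p.2, 1 / p.1))^[4] (z₁, z₂) = (z₁, z₂) ∧
    (z₂ + 1) ^ 2 * (1 / z₁ + 1) ^ 2 / (z₂ * (1 / z₁)) =
      (z₁ + 1) ^ 2 * (z₂ + 1) ^ 2 / (z₁ * z₂) := by
  constructor
  · simp [Function.iterate_succ_apply', one_div, inv_inv]
  · field_simp
    ring
end

section
/- Let α ∈ ℝ and define φ : ℝ⁴ → ℝ⁴ by φ(x₁,x₂,x₃,x₄) = (x₂, x₃, x₄, x₁ + α/(x₄−x₂)) on the set where x₄ ≠ x₂. Then the function H(x₁,x₂,x₃,x₄) = −x₁x₄ + x₁x₂ − x₂x₃ + x₃x₄ satisfies H(φ(x)) = α − H(x). In particular H is a 2-integral: H(φ(φ(x))) = H(x). -/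
/-- for the (3,1)-reduction of lattice potential KdV,
`φ(x₁,x₂,x₃,x₄) = (x₂,x₃,x₄, x₁ + α/(x₄−x₂))`, the function
`H(x₁,x₂,x₃,x₄) = −x₁x₄ + x₁x₂ − x₂x₃ + x₃x₄` satisfies `H(φ x) = α − H x`;
in particular `H` is a 2-integral: `H(φ(φ x)) = H x`. -/
theorem stmt_8 (α x₁ x₂ x₃ x₄ : ℝ) (h : x₄ ≠ x₂) :
    (-(x₂ * (x₁ + α / (x₄ - x₂))) + x₂ * x₃ - x₃ * x₄ +
        x₄ * (x₁ + α / (x₄ - x₂)) =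
      α - (-(x₁ * x₄) + x₁ * x₂ - x₂ * x₃ + x₃ * x₄)) ∧
    (x₁ + α / (x₄ - x₂) ≠ x₃ →
      -(x₃ * (x₂ + α / (x₁ + α / (x₄ - x₂) - x₃))) + x₃ * x₄ -
          x₄ * (x₁ + α / (x₄ - x₂)) +
          (x₁ + α / (x₄ - x₂)) * (x₂ + α / (x₁ + α / (x₄ - x₂) - x₃)) =
        -(x₁ * x₄) + x₁ * x₂ - x₂ * x₃ + x₃ * x₄) := by
  have h1 : x₄ - x₂ ≠ 0 := sub_ne_zero.mpr h
  obtain ⟨a, ha⟩ : ∃ a, α / (x₄ - x₂) = a := ⟨_, rfl⟩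
  have haa : a * (x₄ - x₂) = α := by rw [← ha]; exact div_mul_cancel₀ α h1
  rw [ha]
  constructor
  · linarith [haa]
  · intro h2
    have h3 : x₁ + a - x₃ ≠ 0 := sub_ne_zero.mpr h2
    field_simp
    linear_combination (x₃ - x₁ - a) * haa
end

section
/- Let α ∈ ℝ, n ≥ 2, and define φ : ℝⁿ → ℝⁿ by φ(x₁,…,xₙ) = (x₂,…,xₙ, x₁ + α/(xₙ−x₂)) on the set where xₙ ≠ x₂. Then the Jacobian determinant of φ equals (−1)^{n-1}; in particular φ is volume preserving when n is odd and anti-volume-preserving when n is even. -/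
open ContinuousLinearMap


/-- the (n−1,1)-reduction of lattice potential KdV,
`φ(x₁,…,xₙ) = (x₂,…,xₙ, x₁ + α/(xₙ−x₂))`, has Jacobian determinant
`(−1)^{n-1}`. -/
theorem stmt_9 (n : ℕ) (hn : 2 ≤ n) (α : ℝ) (x : Fin n → ℝ)
    (hx : x ⟨n - 1, by omega⟩ ≠ x ⟨1, by omega⟩) :
    ∀ φ : (Fin n → ℝ) → (Fin n → ℝ),
      (φ = fun (y : Fin n → ℝ) (i : Fin n) =>
        if h : (i : ℕ) + 1 < n then y ⟨(i : ℕ) + 1, h⟩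
        else y ⟨0, by omega⟩ + α / (y ⟨n - 1, by omega⟩ - y ⟨1, by omega⟩)) →
      DifferentiableAt ℝ φ x ∧
        LinearMap.det ((fderiv ℝ φ x).toLinearMap) = (-1 : ℝ) ^ (n - 1) := by
  obtain ⟨m, rfl⟩ : ∃ m, n = m + 2 := ⟨n - 2, by omega⟩
  intro φ hφ
  subst hφ
  have hn1 : (m + 2) - 1 < (m + 2) := by omega
  have h1 : 1 < (m + 2) := by omega
  have h0 : 0 < (m + 2) := by omega
  set a : Fin (m + 2) := ⟨(m + 2) - 1, hn1⟩ with ha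
  set b : Fin (m + 2) := ⟨1, h1⟩ with hb
  have hΔ : x a - x b ≠ 0 := sub_ne_zero_of_ne hx
  set c : ℝ := α / (x a - x b) ^ 2 with hc
  set f : Fin (m + 2) → ((Fin (m + 2) → ℝ) →L[ℝ] ℝ) := fun i =>
    if h : (i : ℕ) + 1 < (m + 2) then (proj (⟨(i : ℕ) + 1, h⟩ : Fin (m + 2)) : (Fin (m + 2) → ℝ) →L[ℝ] ℝ)
    else (proj (⟨0, h0⟩ : Fin (m + 2)) : (Fin (m + 2) → ℝ) →L[ℝ] ℝ) - c • ((proj a : (Fin (m + 2) → ℝ) →L[ℝ] ℝ) - (proj b : (Fin (m + 2) → ℝ) →L[ℝ] ℝ)) with hf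
  have hder : HasFDerivAt
      (fun (y : Fin (m + 2) → ℝ) (i : Fin (m + 2)) =>
        if h : (i : ℕ) + 1 < (m + 2) then y ⟨(i : ℕ) + 1, h⟩
        else y ⟨0, by omega⟩ + α / (y ⟨(m + 2) - 1, by omega⟩ - y ⟨1, by omega⟩))
      (ContinuousLinearMap.pi f) x := by
    apply hasFDerivAt_pi.2
    intro i
    by_cases h : (i : ℕ) + 1 < (m + 2)
    · simp only [hf, dif_pos h]
      exact hasFDerivAt_apply _ x
    · simp only [hf, dif_neg h]
      have hu : HasFDerivAt (fun y : Fin (m + 2) → ℝ => y a - y b) ((proj a : (Fin (m + 2) → ℝ) →L[ℝ] ℝ) - proj b) x :=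
        (hasFDerivAt_apply a x).sub (hasFDerivAt_apply b x)
      have hinv : HasFDerivAt (fun y : Fin (m + 2) → ℝ => (y a - y b)⁻¹)
          ((-mulLeftRight ℝ ℝ (x a - x b)⁻¹ (x a - x b)⁻¹).comp ((proj a : (Fin (m + 2) → ℝ) →L[ℝ] ℝ) - proj b)) x := by
        exact (hasFDerivAt_inv' hΔ).comp x hu
      have hlast : HasFDerivAt (fun y : Fin (m + 2) → ℝ => y ⟨0, h0⟩ + α / (y a - y b))
          (proj (⟨0, h0⟩ : Fin (m + 2)) +
            α • ((-mulLeftRight ℝ ℝ (x a - x b)⁻¹ (x a - x b)⁻¹).comp ((proj a : (Fin (m + 2) → ℝ) →L[ℝ] ℝ) - proj b))) x := by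
        apply (hasFDerivAt_apply _ x).add
        have := hinv.const_mul α
        simpa [div_eq_mul_inv] using this
      have heq : (proj (⟨0, h0⟩ : Fin (m + 2)) +
            α • ((-mulLeftRight ℝ ℝ (x a - x b)⁻¹ (x a - x b)⁻¹).comp ((proj a : (Fin (m + 2) → ℝ) →L[ℝ] ℝ) - proj b)))
          = (proj (⟨0, h0⟩ : Fin (m + 2)) : (Fin (m + 2) → ℝ) →L[ℝ] ℝ) - c • ((proj a : (Fin (m + 2) → ℝ) →L[ℝ] ℝ) - proj b) := by
        ext v
        simp [hc, mulLeftRight_apply]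
        field_simp
        ring
      rw [← heq]
      convert hlast using 2
  refine ⟨hder.differentiableAt, ?_⟩
  rw [hder.fderiv]
  set M : Matrix (Fin (m + 2)) (Fin (m + 2)) ℝ :=
    LinearMap.toMatrix' (ContinuousLinearMap.pi f).toLinearMap with hM
  have hdet : LinearMap.det (ContinuousLinearMap.pi f).toLinearMap = M.det :=
    (LinearMap.det_toMatrix' _).symm
  set N : Matrix (Fin (m + 2)) (Fin (m + 2)) ℝ :=
    Matrix.of fun i j => if (i : ℕ) = 0 then M a j else if (i : ℕ) = (j : ℕ) then 1 else 0 with hN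
  have hMval : ∀ i j : Fin (m + 2), M i j = f i (fun j' => if j' = j then 1 else 0) := by
    intro i j
    rw [hM, LinearMap.toMatrix'_apply]
    show f i (Pi.single j 1) = _
    congr 1; funext j'; rw [Pi.single_apply]
  have hMN : M = N.submatrix (finRotate (m + 2)) _root_.id := by
    ext i j
    rw [Matrix.submatrix_apply, _root_.id]
    rcases eq_or_ne i (Fin.last (m + 1)) with hi | hi
    · have h1 : ((finRotate (m + 2) i : Fin (m + 2)) : ℕ) = 0 := by
        rw [coe_finRotate, if_pos hi]
      have h2 : i = a := by
        rw [hi]; exact Fin.ext rfl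
      have h3 : N ((finRotate (m + 2)) i) j = M a j := by
        show (if (((finRotate (m + 2) i : Fin (m + 2)) : ℕ) = 0) then M a j
          else if (((finRotate (m + 2) i : Fin (m + 2)) : ℕ) = (j : ℕ)) then (1:ℝ) else 0) = M a j
        rw [if_pos h1]
      rw [h3, h2]
    · have h1 : ((finRotate (m + 2) i : Fin (m + 2)) : ℕ) = (i : ℕ) + 1 :=
        coe_finRotate_of_ne_last hi
      have hilt : (i : ℕ) + 1 < m + 2 := by
        have := Fin.val_lt_last hi
        omega
      have h2 : M i j = if ((i : ℕ) + 1 = (j : ℕ)) then 1 else 0 := by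
        rw [hMval, hf]
        simp only [dif_pos hilt, ContinuousLinearMap.proj_apply]
        by_cases hj : (⟨(i : ℕ) + 1, hilt⟩ : Fin (m + 2)) = j
        · rw [if_pos hj, if_pos (by rw [← hj])]
        · rw [if_neg hj, if_neg (by intro hc; exact hj (Fin.ext hc))]
      have h3 : N ((finRotate (m + 2)) i) j = if ((i : ℕ) + 1 = (j : ℕ)) then 1 else 0 := by
        show (if (((finRotate (m + 2) i : Fin (m + 2)) : ℕ) = 0) then M a j
          else if (((finRotate (m + 2) i : Fin (m + 2)) : ℕ) = (j : ℕ)) then (1:ℝ) else 0) = _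
        rw [h1, if_neg (by omega)]
      rw [h2, h3]
  have hNtri : N.BlockTriangular _root_.id := by
    intro i j hij
    simp only [hN, Matrix.of_apply]
    have hj : (j : ℕ) < (i : ℕ) := hij
    rw [if_neg (by omega), if_neg (by omega)]
  have hNdiag : ∀ i : Fin (m + 2), N i i = 1 := by
    intro i
    rcases eq_or_ne ((i : ℕ)) 0 with hi | hi
    · simp only [hN, Matrix.of_apply, if_pos hi]
      rw [hMval, hf]
      have hna : ¬ ((a : ℕ) + 1 < m + 2) := by simp [ha]
      simp only [dif_neg hna]
      have hane : a ≠ i := by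
        intro hc
        have h' : m + 2 - 1 = (i : ℕ) := congrArg Fin.val hc
        omega
      have hbne : b ≠ i := by
        intro hc
        have h' : 1 = (i : ℕ) := congrArg Fin.val hc
        omega
      have hie : (⟨0, h0⟩ : Fin (m + 2)) = i := Fin.ext hi.symm
      simp [hie, hane, hbne]
    · simp [hN, hi]
      intro h0'; subst h0'; simp at hi
  have hNdet : N.det = 1 := by
    rw [Matrix.det_of_upperTriangular hNtri]
    simp [hNdiag]
  have hsign : Equiv.Perm.sign (finRotate (m + 2)) = (-1 : ℤˣ) ^ (m + 1) := by
    have := sign_finRotate (m + 2); rwa [show m + 2 - 1 = m + 1 by omega] at this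
  rw [hdet, hMN, Matrix.det_permute, hNdet, hsign, mul_one]
  show (((((-1 : ℤˣ) ^ (m + 1)) : ℤˣ) : ℤ) : ℝ) = (-1 : ℝ) ^ ((m + 2) - 1)
  have : (m + 2) - 1 = m + 1 := by omega
  rw [this]
  push_cast
  norm_num
end

section
/- Define φ : ℝ⁴ → ℝ⁴ on the set where x₁ ≠ 0 ≠ x₃ by φ(x₁,x₂,x₃,x₄) = (x₃ + x₁x₂/x₃ − x₃x₄/x₁, x₃x₄/x₁, x₁ + x₃x₄/x₁ − x₁x₂/x₃, x₁x₂/x₃). Then the three functions I₁ = x₁+x₃, I₂ = x₂x₄, I₃ = x₁x₂ + x₃x₄ − x₁x₃ are all invariant under φ. -/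
/-- `I₁ = x₁+x₃`, `I₂ = x₂x₄`, `I₃ = x₁x₂+x₃x₄−x₁x₃` are
invariant under the (0,2)-reduction of the QD-algorithm,
`φ(x₁,x₂,x₃,x₄) = (x₃ + x₁x₂/x₃ - x₃x₄/x₁, x₃x₄/x₁, x₁ + x₃x₄/x₁ - x₁x₂/x₃,
x₁x₂/x₃)`. -/
theorem stmt_10 (x₁ x₂ x₃ x₄ : ℝ) (h₁ : x₁ ≠ 0) (h₃ : x₃ ≠ 0) :
    ((x₃ + x₁ * x₂ / x₃ - x₃ * x₄ / x₁) +
        (x₁ + x₃ * x₄ / x₁ - x₁ * x₂ / x₃) = x₁ + x₃) ∧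
    ((x₃ * x₄ / x₁) * (x₁ * x₂ / x₃) = x₂ * x₄) ∧
    ((x₃ + x₁ * x₂ / x₃ - x₃ * x₄ / x₁) * (x₃ * x₄ / x₁) +
        (x₁ + x₃ * x₄ / x₁ - x₁ * x₂ / x₃) * (x₁ * x₂ / x₃) -
        (x₃ + x₁ * x₂ / x₃ - x₃ * x₄ / x₁) *
          (x₁ + x₃ * x₄ / x₁ - x₁ * x₂ / x₃) =
      x₁ * x₂ + x₃ * x₄ - x₁ * x₃) := by
  refine ⟨by field_simp; ring, by field_simp, by field_simp; ring⟩
end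

section
/- Define φ : ℝ⁴ → ℝ⁴ on the set where x₄ ≠ 0 by φ(x₁,x₂,x₃,x₄) = (x₃, x₁x₂/x₄ + x₄ − x₃, x₁x₂/x₄, x₂). Then the three functions I₁ = x₂ + x₄ − x₃, I₂ = x₁x₃/x₄, and I₃ = (x₁−x₄)(x₂−x₃)(x₃−x₄)/x₄ are each invariant under φ. -/
/-- `I₁ = x₂+x₄−x₃`, `I₂ = x₁x₃/x₄`, and
`I₃ = (x₁−x₄)(x₂−x₃)(x₃−x₄)/x₄` are invariant under the (2,−3)-reduction of
the QD-algorithm, `φ(x₁,x₂,x₃,x₄) = (x₃, x₁x₂/x₄ + x₄ − x₃, x₁x₂/x₄, x₂)`. -/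
theorem stmt_11 (x₁ x₂ x₃ x₄ : ℝ) (h₄ : x₄ ≠ 0) (h₂ : x₂ ≠ 0) :
    ((x₁ * x₂ / x₄ + x₄ - x₃) + x₂ - x₁ * x₂ / x₄ = x₂ + x₄ - x₃) ∧
    (x₃ * (x₁ * x₂ / x₄) / x₂ = x₁ * x₃ / x₄) ∧
    ((x₃ - x₂) * ((x₁ * x₂ / x₄ + x₄ - x₃) - x₁ * x₂ / x₄) *
        (x₁ * x₂ / x₄ - x₂) / x₂ =
      (x₁ - x₄) * (x₂ - x₃) * (x₃ - x₄) / x₄) := by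
  refine ⟨by ring, by field_simp, by field_simp; ring⟩
end

section
/- Define the map φ : ℝ³ → ℝ³ by φ(y₁,y₂,y₃) = (y₃/y₂, y₁ + (1−y₃)/y₂, y₁) on the set where y₂ ≠ 0. Then I₁ = y₁y₃/(y₂−y₃+1) and I₂ = (y₂−y₃)(y₁−1)(y₃−1)/(y₂−y₃+1)² are invariant under φ (whenever denominators are nonzero). -/
/-- `I₁ = y₁y₃/(y₂−y₃+1)` and
`I₂ = (y₂−y₃)(y₁−1)(y₃−1)/(y₂−y₃+1)²` are invariant under
`φ(y₁,y₂,y₃) = (y₃/y₂, y₁ + (1−y₃)/y₂, y₁)`. -/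
theorem stmt_12 (y₁ y₂ y₃ : ℝ) (h₂ : y₂ ≠ 0) (h : y₂ - y₃ + 1 ≠ 0) :
    ((y₃ / y₂) * y₁ / ((y₁ + (1 - y₃) / y₂) - y₁ + 1) =
      y₁ * y₃ / (y₂ - y₃ + 1)) ∧
    (((y₁ + (1 - y₃) / y₂) - y₁) * (y₃ / y₂ - 1) * (y₁ - 1) /
        ((y₁ + (1 - y₃) / y₂) - y₁ + 1) ^ 2 =
      (y₂ - y₃) * (y₁ - 1) * (y₃ - 1) / (y₂ - y₃ + 1) ^ 2) := by
  have hd : (y₁ + (1 - y₃) / y₂) - y₁ + 1 = (y₂ - y₃ + 1) / y₂ := by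
    field_simp; ring
  constructor
  · rw [hd]; field_simp
  · rw [hd]; rw [div_pow]; field_simp; ring
end

section
/- Let φ(y₁,y₂,y₃) = (y₃/y₂, y₁ + (1−y₃)/y₂, y₁) (defined where y₂ ≠ 0). Then: (a) for every a ∈ ℝ with a ≠ 0, the point (a,1,a) is a fixed point of φ; (b) for all a,b ∈ ℝ with b−1 ≠ 0 (and such that all iterates are defined), the point (a, b−1, b) is periodic with period dividing 4, i.e. φ⁴(a,b−1,b) = (a,b−1,b). -/
/-- for `φ(y₁,y₂,y₃) = (y₃/y₂, y₁ + (1−y₃)/y₂, y₁)`: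
(a) `(a,1,a)` is a fixed point for `a ≠ 0`; (b) `(a,b−1,b)` has period
dividing 4 (whenever the iterates are defined, i.e. `a ≠ 1`, `b ≠ 1`). -/
theorem stmt_13 :
    ∀ φ : ℝ × ℝ × ℝ → ℝ × ℝ × ℝ,
      (φ = fun y => (y.2.2 / y.2.1, y.1 + (1 - y.2.2) / y.2.1, y.1)) →
      (∀ a : ℝ, a ≠ 0 → φ (a, 1, a) = (a, 1, a)) ∧
      (∀ a b : ℝ, b - 1 ≠ 0 → a - 1 ≠ 0 →
        φ^[4] (a, b - 1, b) = (a, b - 1, b)) := by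
  intro φ hφ
  subst hφ
  set f : ℝ × ℝ × ℝ → ℝ × ℝ × ℝ :=
    fun y => (y.2.2 / y.2.1, y.1 + (1 - y.2.2) / y.2.1, y.1) with hf
  constructor
  · intro a ha
    simp [hf]
  · intro a b hb ha
    have hb' : (b - 1 : ℝ)⁻¹ ≠ 0 := inv_ne_zero hb
    have h1 : f (a, b - 1, b) = (b / (b - 1), a - 1, a) := by
      simp only [hf, Prod.mk.injEq]
      refine ⟨trivial, ?_, trivial⟩
      field_simp
      ring
    have h2 : f (b / (b - 1), a - 1, a) = (a / (a - 1), (b - 1)⁻¹, b / (b - 1)) := by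
      simp only [hf, Prod.mk.injEq]
      refine ⟨trivial, ?_, trivial⟩
      field_simp
      ring
    have h3 : f (a / (a - 1), (b - 1)⁻¹, b / (b - 1)) = (b, (a - 1)⁻¹, a / (a - 1)) := by
      simp only [hf, Prod.mk.injEq]
      refine ⟨?_, ?_, trivial⟩
      · field_simp
      · field_simp
        ring
    have h4 : f (b, (a - 1)⁻¹, a / (a - 1)) = (a, b - 1, b) := by
      simp only [hf, Prod.mk.injEq]
      refine ⟨?_, ?_, trivial⟩
      · field_simp
      · field_simp
        ring
    simp only [Function.iterate_succ_apply, Function.iterate_zero_apply, h1, h2, h3, h4]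
end

section
/- Let γ ∈ ℝ and define φ : ℝ² → ℝ² by φ(X,Y) = (−X + γ/(Y − X²), −Y + X²), defined where Y ≠ X². Then the function I(X,Y) = Y(X² − Y) + γX satisfies I(φ(X,Y)) = I(X,Y). -/
/-- `I(X,Y) = Y(X²−Y) + γX` is invariant under the reduced
Boussinesq map `φ(X,Y) = (−X + γ(Y−X²)⁻¹, −Y + X²)`. -/
theorem stmt_14 (γ X Y : ℝ) (h : Y ≠ X ^ 2) :
    (-Y + X ^ 2) * ((-X + γ * (Y - X ^ 2)⁻¹) ^ 2 - (-Y + X ^ 2)) +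
        γ * (-X + γ * (Y - X ^ 2)⁻¹) =
      Y * (X ^ 2 - Y) + γ * X := by
  have h' : Y - X ^ 2 ≠ 0 := sub_ne_zero.mpr h
  field_simp
  ring
end

section
/- Let γ ∈ ℝ and define the linear map L : ℝ² → ℝ² by L(i₁,i₂) = (i₂ − i₁ + γ, −i₁ + γ). Then L∘L∘L is the identity map, and both functions i₂² + i₁(i₁ − i₂ − γ) and i₁(γ − i₂)(γ − i₁ + i₂) are invariant under L. -/
/-- `L(i₁,i₂) = (i₂ − i₁ + γ, −i₁ + γ)` satisfies `L³ = id`,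
and `i₂² + i₁(i₁ − i₂ − γ)` and `i₁(γ − i₂)(γ − i₁ + i₂)` are invariant
under `L`. -/
theorem stmt_15 (γ : ℝ) :
    ∀ L : ℝ × ℝ → ℝ × ℝ,
      (L = fun p => (p.2 - p.1 + γ, -p.1 + γ)) →
      (L ∘ L ∘ L = id) ∧
      (∀ i₁ i₂ : ℝ,
        (L (i₁, i₂)).2 ^ 2 +
          (L (i₁, i₂)).1 * ((L (i₁, i₂)).1 - (L (i₁, i₂)).2 - γ) =
          i₂ ^ 2 + i₁ * (i₁ - i₂ - γ)) ∧
      (∀ i₁ i₂ : ℝ,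
        (L (i₁, i₂)).1 * (γ - (L (i₁, i₂)).2) *
          (γ - (L (i₁, i₂)).1 + (L (i₁, i₂)).2) =
          i₁ * (γ - i₂) * (γ - i₁ + i₂)) := by
  intro L hL
  subst hL
  refine ⟨funext fun p => ?_, fun i₁ i₂ => by simp; ring, fun i₁ i₂ => by simp; ring⟩
  simp [Prod.ext_iff]
  ring
end

section
/- Let α ∈ ℝ with α ≠ 0 and suppose real numbers x₁,x₂,x₃,y₁,y₂,y₃ satisfy (x₁−y₂)(x₂−y₁) = α, (x₂−y₃)(x₃−y₂) = α, and (x₃−y₁)(x₁−y₃) = α. Then (y₁−y₂)(y₂−y₃)((y₁−y₂)+(y₂−y₃)) = (x₁−x₂)(x₂−x₃)((x₁−x₂)+(x₂−x₃)). -/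
/-- invariance of the integral `q₁q₂(q₁+q₂)` (with
`q₁ = x₁−x₂`, `q₂ = x₂−x₃`) under the (3,0)-periodic correspondence of the
lattice potential KdV equation. -/
theorem stmt_18 (α x₁ x₂ x₃ y₁ y₂ y₃ : ℝ) (hα : α ≠ 0)
    (h₁ : (x₁ - y₂) * (x₂ - y₁) = α)
    (h₂ : (x₂ - y₃) * (x₃ - y₂) = α)
    (h₃ : (x₃ - y₁) * (x₁ - y₃) = α) :
    (y₁ - y₂) * (y₂ - y₃) * ((y₁ - y₂) + (y₂ - y₃)) =
      (x₁ - x₂) * (x₂ - x₃) * ((x₁ - x₂) + (x₂ - x₃)) := by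
  have hb : x₂ - y₁ ≠ 0 := by
    intro h; apply hα; rw [← h₁, h, mul_zero]
  have hd : x₃ - y₂ ≠ 0 := by
    intro h; apply hα; rw [← h₂, h, mul_zero]
  have hf : x₁ - y₃ ≠ 0 := by
    intro h; apply hα; rw [← h₃, h]; ring
  have hK : (x₂ - y₁) * ((x₃ - y₂) * (x₁ - y₃)) ≠ 0 :=
    mul_ne_zero hb (mul_ne_zero hd hf)
  apply mul_left_cancel₀ hK
  linear_combination (-((x₃-y₂)*(x₂-x₁)*((x₁-y₃)*(x₃-x₂)))) * (h₁ - h₂) +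
    (-((x₃-y₂)*(y₁-y₃)*((x₁-y₃)*(x₃-x₂)))) * (h₂ - h₃) +
    (-((x₃-y₂)*(y₁-y₃)*((x₁-y₃)*(y₂-y₁)))) * (h₃ - h₁)
end

section
/- Define P, R : (ℝ\{0, with x₁+x₂ ≠ 0 ≠ x₃+x₄})⁴ → ℝ⁴ by P(x₁,x₂,x₃,x₄) = (x₄,x₁,x₂,x₃) and R(x₁,x₂,x₃,x₄) = (x₁(x₃+x₄)/(x₁+x₂), x₄(x₁+x₂)/(x₃+x₄), x₃(x₁+x₂)/(x₃+x₄), x₂(x₃+x₄)/(x₁+x₂)). Then (a) R∘P∘P = P∘P∘R and R∘P∘R = P∘P∘P wherever both sides are defined, and (b) the three functions x₁+x₂+x₃+x₄, x₁x₃+x₂x₄, and x₁x₂x₃x₄ are invariant under both P and R. -/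
/-- The two branches of the (2,0)-periodic reduction correspondence of the
QD-algorithm. -/
noncomputable def qdP (x : ℝ × ℝ × ℝ × ℝ) : ℝ × ℝ × ℝ × ℝ :=
  (x.2.2.2, x.1, x.2.1, x.2.2.1)

noncomputable def qdR (x : ℝ × ℝ × ℝ × ℝ) : ℝ × ℝ × ℝ × ℝ :=
  (x.1 * (x.2.2.1 + x.2.2.2) / (x.1 + x.2.1),
   x.2.2.2 * (x.1 + x.2.1) / (x.2.2.1 + x.2.2.2),
   x.2.2.1 * (x.1 + x.2.1) / (x.2.2.1 + x.2.2.2),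
   x.2.1 * (x.2.2.1 + x.2.2.2) / (x.1 + x.2.1))

/-- the branches `P`, `R` of the (2,0)-reduction of the
QD-algorithm satisfy `R∘P∘P = P∘P∘R` and `R∘P∘R = P∘P∘P`, and the functions
`x₁+x₂+x₃+x₄`, `x₁x₃+x₂x₄`, `x₁x₂x₃x₄` are invariant under both `P` and `R`
(on the set where all occurring denominators are nonzero). -/
theorem stmt_19 (x₁ x₂ x₃ x₄ : ℝ)
    (h₁ : x₁ ≠ 0) (h₂ : x₂ ≠ 0) (h₃ : x₃ ≠ 0) (h₄ : x₄ ≠ 0)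
    (hs : x₁ + x₂ ≠ 0) (ht : x₃ + x₄ ≠ 0) :
    (qdR (qdP (qdP (x₁, x₂, x₃, x₄))) = qdP (qdP (qdR (x₁, x₂, x₃, x₄))) ∧
      qdR (qdP (qdR (x₁, x₂, x₃, x₄))) = qdP (qdP (qdP (x₁, x₂, x₃, x₄)))) ∧
    (∀ y : ℝ × ℝ × ℝ × ℝ,
      (y = qdP (x₁, x₂, x₃, x₄) ∨ y = qdR (x₁, x₂, x₃, x₄)) →
        y.1 + y.2.1 + y.2.2.1 + y.2.2.2 = x₁ + x₂ + x₃ + x₄ ∧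
        y.1 * y.2.2.1 + y.2.1 * y.2.2.2 = x₁ * x₃ + x₂ * x₄ ∧
        y.1 * y.2.1 * y.2.2.1 * y.2.2.2 = x₁ * x₂ * x₃ * x₄) := by
  refine ⟨⟨?_, ?_⟩, ?_⟩
  · simp only [qdP, qdR]
  · simp only [qdP, qdR]
    have h1 : x₂ * (x₃ + x₄) / (x₁ + x₂) + x₁ * (x₃ + x₄) / (x₁ + x₂) = x₃ + x₄ := by
      field_simp; ring
    have h2 : x₄ * (x₁ + x₂) / (x₃ + x₄) + x₃ * (x₁ + x₂) / (x₃ + x₄) = x₁ + x₂ := by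
      field_simp; ring
    rw [h1, h2]
    simp only [Prod.mk.injEq]
    refine ⟨?_, ?_, ?_, ?_⟩ <;> field_simp
  · rintro y (rfl | rfl) <;> simp only [qdP, qdR] <;>
      refine ⟨?_, ?_, ?_⟩ <;> first | (field_simp; ring) | (field_simp; done) | ring
end
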